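/- Let A be a valued σ-structure and g : A → A a mapping in the support of some inverse fractional homomorphism from A to A. Then the image structure g(A) is equivalent to A, i.e., opt(g(A), C) = opt(A, C) for every valued σ-structure C. -/

import Mathlib

open scoped Classical
noncomputable section

/-- The value codomain `ℚ≥0 ∪ {∞}`. -/
abbrev Val : Type := WithTop NNRat

/-- A valued structure over a signature given by a type `S` of function symbols
with arities `ar`. -/
structure VStruct (S : Type) (ar : S → ℕ) where
  U : Type
  [fintypeU : Fintype U]
  [decU : DecidableEq U]
  [nonemptyU : Nonempty U]
  val : (f : S) → (Fin (ar f) → U) → Val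

attribute [instance] VStruct.fintypeU VStruct.decU VStruct.nonemptyU

variable {S : Type} [Fintype S] {ar : S → ℕ}

/-- Cost of a mapping `h` between the universes of two valued structures. -/
def VStruct.cost (A B : VStruct S ar) (h : A.U → B.U) : Val :=
  ∑ f : S, ∑ x : Fin (ar f) → A.U, A.val f x * B.val f (h ∘ x)

/-- `opt(A,B)`: the minimum cost over all mappings. -/
def VStruct.opt (A B : VStruct S ar) : Val :=
  Finset.univ.inf' Finset.univ_nonempty (A.cost B)

/-- `f^A(g⁻¹(x))`: sum of `f^A` over the `g`-preimage of the tuple `x`. -/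
def VStruct.preSum (A B : VStruct S ar) (g : A.U → B.U) (f : S)
    (x : Fin (ar f) → B.U) : Val :=
  ∑ y ∈ Finset.univ.filter (fun y : Fin (ar f) → A.U => g ∘ y = x), A.val f y

/-- Inverse fractional homomorphism from `A` to `B`. -/
def IsIFH (A B : VStruct S ar) (ω : (A.U → B.U) → NNRat) : Prop :=
  (∑ g : A.U → B.U, ω g) = 1 ∧
  ∀ (f : S) (x : Fin (ar f) → B.U),
    (∑ g : A.U → B.U, (ω g : Val) * A.preSum B g f x) ≤ B.val f x

/-- `A ≼ B`: `A` improves `B`. -/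
def Improves (A B : VStruct S ar) : Prop :=
  ∀ C : VStruct S ar, A.opt C ≤ B.opt C

/-- Valued equivalence. -/
def VEquiv (A B : VStruct S ar) : Prop :=
  ∀ C : VStruct S ar, A.opt C = B.opt C

/-- A valued structure is a core if every inverse fractional homomorphism from
it to itself has only surjective mappings in its support. -/
def IsCore (A : VStruct S ar) : Prop :=
  ∀ ω : (A.U → A.U) → NNRat, IsIFH A A ω →
    ∀ g : A.U → A.U, 0 < ω g → Function.Surjective g

/-- The image valued structure `g(A)` of a self-map `g`. -/
def imageStruct (A : VStruct S ar) (g : A.U → A.U) : VStruct S ar where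
  U := Set.range g
  fintypeU := (Set.toFinite _).fintype
  decU := inferInstance
  nonemptyU := ⟨⟨_, Set.mem_range_self (Classical.arbitrary A.U)⟩⟩
  val := fun f x => ∑ y ∈ Finset.univ.filter
      (fun y : Fin (ar f) → A.U => ∀ i, g (y i) = (x i : A.U)), A.val f y

/-!
Let `h : A → C` be an optimal mapping. Pulling the inverse fractional homomorphism `ω` back along
`h` shows that the `ω`-average of the costs of `h ∘ g'` is at most `opt(A, C)`; since each of these
costs is at least `opt(A, C)`, every `g'` in the support of `ω` makes `h ∘ g'` optimal as well.
The cost of `h` restricted to `g(A)` is the cost of `h ∘ g`, so `opt(g(A), C) ≤ opt(A, C)`.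
Conversely every mapping `g(A) → C` composed with the corestriction of `g` is a mapping `A → C`
of the same cost.
-/

theorem le_of_sum_mul_le_of_forall_le {ι : Type*} [Fintype ι] (ω : ι → ℚ≥0) (c : ι → Val)
    {m : Val} (hω : ∑ i, ω i = 1) (hm : ∀ i, m ≤ c i) (hsum : ∑ i, (ω i : Val) * c i ≤ m)
    {j : ι} (hj : 0 < ω j) : c j ≤ m := by
  by_contra! hlt
  have hmean : ∑ i, (ω i : Val) * m = m := by
    rw [← Finset.sum_mul, ← WithTop.coe_sum, hω, WithTop.coe_one, one_mul]
  refine (hsum.trans_eq hmean.symm).not_gt ?_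
  rw [← Finset.add_sum_erase _ _ (Finset.mem_univ j),
    ← Finset.add_sum_erase _ _ (Finset.mem_univ j)]
  -- strict monotonicity of `+` on `Val` needs the untouched summand to be finite
  refine WithTop.add_lt_add_of_lt_of_le ?_ ?_ ?_
  · exact WithTop.sum_ne_top.2 fun i _ => WithTop.mul_ne_top WithTop.coe_ne_top hlt.ne_top
  · exact WithTop.mul_right_strictMono (by exact_mod_cast hj) WithTop.coe_ne_top hlt
  · exact Finset.sum_le_sum fun i _ => mul_le_mul_right (hm i) _

namespace VStruct

variable (A B C : VStruct S ar)

theorem opt_le_cost (h : A.U → C.U) : A.opt C ≤ A.cost C h :=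
  Finset.inf'_le _ (Finset.mem_univ h)

theorem exists_cost_eq_opt : ∃ h : A.U → C.U, A.cost C h = A.opt C := by
  obtain ⟨h, -, hh⟩ := Finset.exists_mem_eq_inf' Finset.univ_nonempty (A.cost C)
  exact ⟨h, hh.symm⟩

theorem cost_comp (g : A.U → B.U) (h : B.U → C.U) :
    A.cost C (h ∘ g) = ∑ f : S, ∑ x : Fin (ar f) → B.U, A.preSum B g f x * C.val f (h ∘ x) := by
  refine Finset.sum_congr rfl fun f _ => ?_
  rw [← Finset.sum_fiberwise Finset.univ (g ∘ ·)]
  refine Finset.sum_congr rfl fun x _ => ?_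
  rw [preSum, Finset.sum_mul]
  refine Finset.sum_congr rfl fun y hy => ?_
  rw [← (Finset.mem_filter.1 hy).2]
  rfl

end VStruct

theorem IsIFH.sum_mul_cost_comp_le {A B : VStruct S ar} {ω : (A.U → B.U) → ℚ≥0}
    (hω : IsIFH A B ω) (C : VStruct S ar) (h : B.U → C.U) :
    ∑ g, (ω g : Val) * A.cost C (h ∘ g) ≤ B.cost C h :=
  calc ∑ g, (ω g : Val) * A.cost C (h ∘ g)
      = ∑ f : S, ∑ x : Fin (ar f) → B.U,
          (∑ g, (ω g : Val) * A.preSum B g f x) * C.val f (h ∘ x) := by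
        simp_rw [VStruct.cost_comp, Finset.mul_sum, Finset.sum_mul, mul_assoc]
        rw [Finset.sum_comm]
        exact Finset.sum_congr rfl fun f _ => Finset.sum_comm
    _ ≤ B.cost C h :=
        Finset.sum_le_sum fun f _ => Finset.sum_le_sum fun x _ => mul_le_mul_left (hω.2 f x) _

theorem IsIFH.cost_comp_le_opt {A : VStruct S ar} {ω : (A.U → A.U) → ℚ≥0} (hω : IsIFH A A ω)
    {g : A.U → A.U} (hg : 0 < ω g) {C : VStruct S ar} {h : A.U → C.U}
    (hh : A.cost C h = A.opt C) : A.cost C (h ∘ g) ≤ A.opt C :=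
  le_of_sum_mul_le_of_forall_le ω (fun g' => A.cost C (h ∘ g')) hω.1
    (fun g' => A.opt_le_cost C (h ∘ g')) (hh ▸ hω.sum_mul_cost_comp_le C h) hg

theorem cost_imageStruct (A C : VStruct S ar) (g : A.U → A.U)
    (h : (imageStruct A g).U → C.U) :
    (imageStruct A g).cost C h = A.cost C (h ∘ Set.rangeFactorization g) := by
  have hval : ∀ f x, (imageStruct A g).val f x =
      A.preSum (imageStruct A g) (Set.rangeFactorization g) f x := fun f x => by
    refine Finset.sum_congr (Finset.filter_congr fun y _ => ?_) fun _ _ => rfl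
    rw [funext_iff]
    exact forall_congr' fun i => (Subtype.ext_iff (a1 := Set.rangeFactorization g (y i))).symm
  refine Eq.trans ?_ (A.cost_comp (imageStruct A g) C (Set.rangeFactorization g) h).symm
  simp only [VStruct.cost, hval]

/-- If `g` is in the support of an inverse fractional homomorphism from `A`
to itself, then `g(A)` is equivalent to `A`. -/
theorem stmt3 (A : VStruct S ar) (g : A.U → A.U)
    (ω : (A.U → A.U) → NNRat) (hω : IsIFH A A ω) (hg : 0 < ω g) :
    VEquiv (imageStruct A g) A := by
  intro C
  obtain ⟨h, hh⟩ := A.exists_cost_eq_opt C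
  obtain ⟨h', hh'⟩ := (imageStruct A g).exists_cost_eq_opt C
  refine le_antisymm ?_ ?_
  · calc (imageStruct A g).opt C
        ≤ (imageStruct A g).cost C (h ∘ Subtype.val) := VStruct.opt_le_cost _ C _
      _ = A.cost C (h ∘ g) := cost_imageStruct A C g _
      _ ≤ A.opt C := hω.cost_comp_le_opt hg hh
  · rw [← hh', cost_imageStruct]
    exact A.opt_le_cost C _
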